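/- arXiv:math/0207289 — 4 statements merged into one kernel-verified Lean document; each statement's English description precedes it below -/
import Mathlib

section
/- Let Λ ⊂ ℝ^L be a full-rank lattice with covolume ν. Then lim_{r→∞} (#{λ ∈ Λ : ‖λ‖ ≤ r}) / r^L = B_L / ν, where B_L = π^{L/2}/Γ(L/2+1) is the volume of the unit ball in ℝ^L. -/
open Filter MeasureTheory Bornology Submodule Metric Pointwise ENNReal

/-- For a full-rank lattice `Λ ⊂ ℝ^L` with covolume `ν`, the number of lattice
points in the ball of radius `r` satisfies
`lim_{r→∞} #{λ ∈ Λ : ‖λ‖ ≤ r} / r^L = B_L / ν`, where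
`B_L = π^{L/2}/Γ(L/2+1)` is the volume of the unit ball. -/
theorem lattice_point_count_asymptotics {L : ℕ} (hL : 1 ≤ L)
    (Λ : Submodule ℤ (EuclideanSpace ℝ (Fin L)))
    [DiscreteTopology Λ] [IsZLattice ℝ Λ] :
    Tendsto
      (fun r : ℝ =>
        (Nat.card {x : Λ // ‖(x : EuclideanSpace ℝ (Fin L))‖ ≤ r} : ℝ) / r ^ L)
      atTop
      (nhds ((Real.pi ^ ((L : ℝ) / 2) / Real.Gamma ((L : ℝ) / 2 + 1))
        / ZLattice.covolume Λ)) := by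
  have : Nonempty (Fin L) := Fin.pos_iff_nonempty.mp hL
  set E := EuclideanSpace ℝ (Fin L)
  let b := Module.Free.chooseBasis ℤ Λ
  let bR := b.ofZLatticeBasis ℝ
  have hspan : span ℤ (Set.range bR) = Λ := b.ofZLatticeBasis_span ℝ
  set F := ZSpan.fundamentalDomain bR with hF
  obtain ⟨d, hd0, hd⟩ := (ZSpan.fundamentalDomain_isBounded bR).subset_closedBall_lt 0 0
  have hFm : MeasurableSet F := ZSpan.fundamentalDomain_measurableSet bR
  have hcov : ZLattice.covolume Λ = (volume F).toReal :=
    ZLattice.covolume_eq_measure_fundamentalDomain Λ volume (ZLattice.isAddFundamentalDomain b volume)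
  have hFne : volume F ≠ 0 := ZSpan.measure_fundamentalDomain_ne_zero bR
  have hFfin : volume F ≠ ⊤ := by
    refine ne_top_of_le_ne_top ?_ (measure_mono hd)
    exact (measure_closedBall_lt_top).ne
  -- finiteness of lattice points in balls
  have hfin : ∀ r : ℝ, {x : Λ | ‖(x : E)‖ ≤ r}.Finite := by
    intro r
    have h1 : IsClosed (Λ : Set E) := by
      have : DiscreteTopology Λ.toAddSubgroup := ‹DiscreteTopology Λ›
      exact AddSubgroup.isClosed_of_discrete (H := Λ.toAddSubgroup)
    have h2 : ((Λ : Set E) ∩ closedBall 0 r).Finite := by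
      have hc : IsCompact ((Λ : Set E) ∩ closedBall 0 r) :=
        (isCompact_closedBall 0 r).inter_left h1
      exact hc.finite (isDiscrete_iff_discreteTopology.mpr (DiscreteTopology.of_subset inferInstance Set.inter_subset_left))
    have := h2.preimage (f := fun x : Λ => (x : E)) (Subtype.coe_injective.injOn)
    refine this.subset ?_
    intro x hx
    exact ⟨x.2, by simpa using hx⟩
  -- uniqueness of translate
  have huniq : ∀ (x y y' : E), y ∈ Λ → y' ∈ Λ → x - y ∈ F → x - y' ∈ F → y = y' := by
    intro x y y' hy hy' h h'
    obtain ⟨v, -, hv⟩ := ZSpan.exist_unique_vadd_mem_fundamentalDomain bR x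
    have h1 := hv ⟨-y, by rw [hspan]; exact neg_mem hy⟩
      (by show -y + x ∈ F; rwa [neg_add_eq_sub])
    have h2 := hv ⟨-y', by rw [hspan]; exact neg_mem hy'⟩
      (by show -y' + x ∈ F; rwa [neg_add_eq_sub])
    have h3 := congrArg Subtype.val (h1.trans h2.symm)
    exact neg_injective h3
  -- the key volume identity
  have hcount : ∀ r : ℝ,
      volume (⋃ x ∈ (hfin r).toFinset, ((x : E) +ᵥ F)) =
        (Nat.card {x : Λ // ‖(x : E)‖ ≤ r}) * volume F := by
    intro r
    rw [measure_biUnion_finset ?_ (fun x _ => hFm.const_vadd _)]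
    · simp_rw [measure_vadd, Finset.sum_const, nsmul_eq_mul]
      congr 1
      norm_cast
      exact ((Set.ncard_eq_toFinset_card _ (hfin r)).symm.trans (Nat.card_coe_set_eq _).symm)
    · intro x hx y hy hxy
      refine Set.disjoint_left.mpr fun z hz hz' => hxy ?_
      rw [Set.mem_vadd_set_iff_neg_vadd_mem] at hz hz'
      have hz1 : z - (x : E) ∈ F := by simpa [vadd_eq_add, neg_add_eq_sub] using hz
      have hz2 : z - (y : E) ∈ F := by simpa [vadd_eq_add, neg_add_eq_sub] using hz'
      exact Subtype.coe_injective (huniq z x y x.2 y.2 hz1 hz2)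
  set N : ℝ → ℕ := fun r => Nat.card {x : Λ // ‖(x : E)‖ ≤ r} with hN
  have hupper : ∀ r : ℝ, (N r : ℝ≥0∞) * volume F ≤ volume (closedBall (0:E) (r + d)) := by
    intro r
    rw [← hcount r]
    refine measure_mono ?_
    intro z hz
    simp only [Set.mem_iUnion] at hz
    obtain ⟨x, hx, hzx⟩ := hz
    obtain ⟨f, hf, rfl⟩ := hzx
    have hx' : ‖(x : E)‖ ≤ r := by simpa using (Set.Finite.mem_toFinset _).mp hx
    have hfd : ‖f‖ ≤ d := by simpa using hd hf
    simp only [mem_closedBall, dist_zero_right]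
    calc ‖(x:E) +ᵥ f‖ = ‖(x:E) + f‖ := rfl
    _ ≤ ‖(x:E)‖ + ‖f‖ := norm_add_le _ _
    _ ≤ r + d := add_le_add hx' hfd
  have hlower : ∀ r : ℝ, volume (closedBall (0:E) (r - d)) ≤ (N r : ℝ≥0∞) * volume F := by
    intro r
    rw [← hcount r]
    refine measure_mono ?_
    intro z hz
    simp only [mem_closedBall, dist_zero_right] at hz
    obtain ⟨v, hv, -⟩ := ZSpan.exist_unique_vadd_mem_fundamentalDomain bR z
    have hvΛ : -(v : E) ∈ Λ := by
      exact (SetLike.ext_iff.mp hspan (-(v : E))).mp (neg_mem v.2)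
    have hvadd : (v : E) + z ∈ F := hv
    have hnorm : ‖(v:E) + z‖ ≤ d := by simpa using hd hvadd
    have hmem : ‖(-(v:E))‖ ≤ r := by
      have heq : -(v:E) = z - ((v:E) + z) := by abel
      rw [heq]
      calc ‖z - ((v:E) + z)‖ ≤ ‖z‖ + ‖(v:E) + z‖ := norm_sub_le _ _
      _ ≤ (r - d) + d := add_le_add hz hnorm
      _ = r := by ring
    simp only [Set.mem_iUnion]
    refine ⟨⟨-(v:E), hvΛ⟩, ?_, ⟨(v:E) + z, hvadd, ?_⟩⟩
    · exact (Set.Finite.mem_toFinset _).mpr (by simpa using hmem)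
    · show -(v:E) + ((v:E) + z) = z
      abel
  -- real-valued bounds
  set V : ℝ := (volume F).toReal with hV
  have hVpos : 0 < V := ENNReal.toReal_pos hFne hFfin
  set c : ℝ := Real.sqrt Real.pi ^ L / Real.Gamma (L / 2 + 1) with hc
  have hcpos : 0 < c := by
    apply div_pos
    · positivity
    · exact Real.Gamma_pos_of_pos (by positivity)
  have hball : ∀ s : ℝ, 0 ≤ s → (volume (closedBall (0:E) s)).toReal = s ^ L * c := by
    intro s hs
    rw [EuclideanSpace.volume_closedBall, Fintype.card_fin, ENNReal.toReal_mul, ENNReal.toReal_pow,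
      ENNReal.toReal_ofReal hs, ENNReal.toReal_ofReal hcpos.le]
  have hreal : ∀ r : ℝ, d ≤ r → (r - d) ^ L * c ≤ (N r : ℝ) * V ∧ (N r : ℝ) * V ≤ (r + d) ^ L * c := by
    intro r hr
    have hfin1 : volume (closedBall (0:E) (r + d)) ≠ ⊤ := measure_closedBall_lt_top.ne
    have hfin2 : ((N r : ℝ≥0∞) * volume F) ≠ ⊤ := ne_top_of_le_ne_top hfin1 (hupper r)
    constructor
    · have := ENNReal.toReal_mono hfin2 (hlower r)
      rwa [hball _ (by linarith), ENNReal.toReal_mul, ENNReal.toReal_natCast] at this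
    · have := ENNReal.toReal_mono hfin1 (hupper r)
      rwa [hball _ (by linarith), ENNReal.toReal_mul, ENNReal.toReal_natCast] at this
  have htarget : (Real.pi ^ ((L : ℝ) / 2) / Real.Gamma ((L : ℝ) / 2 + 1))
      / ZLattice.covolume Λ = c / V := by
    rw [hcov, hc]
    congr 2
    rw [Real.sqrt_eq_rpow, ← Real.rpow_natCast (Real.pi ^ ((1:ℝ)/2)) L,
      ← Real.rpow_mul Real.pi_pos.le]
    congr 1
    ring
  rw [htarget]
  have hdiv : Tendsto (fun r : ℝ => d / r) atTop (nhds 0) :=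
    Tendsto.div_atTop tendsto_const_nhds tendsto_id
  have h1 : Tendsto (fun r : ℝ => (r - d) / r) atTop (nhds 1) := by
    have h0 : Tendsto (fun r : ℝ => 1 - d / r) atTop (nhds 1) := by
      simpa using tendsto_const_nhds.sub hdiv
    refine h0.congr' ?_
    filter_upwards [eventually_gt_atTop 0] with r hr
    field_simp
  have h2 : Tendsto (fun r : ℝ => (r + d) / r) atTop (nhds 1) := by
    have h0 : Tendsto (fun r : ℝ => 1 + d / r) atTop (nhds 1) := by
      simpa using tendsto_const_nhds.add hdiv
    refine h0.congr' ?_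
    filter_upwards [eventually_gt_atTop 0] with r hr
    field_simp
  have hg : Tendsto (fun r : ℝ => ((r - d) / r) ^ L * (c / V)) atTop (nhds (c / V)) := by
    simpa using (h1.pow L).mul_const (c / V)
  have hh : Tendsto (fun r : ℝ => ((r + d) / r) ^ L * (c / V)) atTop (nhds (c / V)) := by
    simpa using (h2.pow L).mul_const (c / V)
  refine tendsto_of_tendsto_of_tendsto_of_le_of_le' hg hh ?_ ?_
  · filter_upwards [eventually_ge_atTop (max d 1)] with r hr
    have hr1 : (1:ℝ) ≤ r := le_trans (le_max_right _ _) hr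
    have hrd : d ≤ r := le_trans (le_max_left _ _) hr
    have hr0 : (0:ℝ) < r := lt_of_lt_of_le one_pos hr1
    have hkey := (hreal r hrd).1
    rw [div_pow, div_mul_div_comm,
      show (N r : ℝ) / r ^ L = ((N r : ℝ) * V) / (r ^ L * V) from
        (mul_div_mul_right _ _ hVpos.ne').symm]
    exact (div_le_div_iff_of_pos_right (mul_pos (pow_pos hr0 L) hVpos)).mpr hkey
  · filter_upwards [eventually_ge_atTop (max d 1)] with r hr
    have hr1 : (1:ℝ) ≤ r := le_trans (le_max_right _ _) hr
    have hrd : d ≤ r := le_trans (le_max_left _ _) hr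
    have hr0 : (0:ℝ) < r := lt_of_lt_of_le one_pos hr1
    have hkey := (hreal r hrd).2
    rw [div_pow, div_mul_div_comm,
      show (N r : ℝ) / r ^ L = ((N r : ℝ) * V) / (r ^ L * V) from
        (mul_div_mul_right _ _ hVpos.ne').symm]
    exact (div_le_div_iff_of_pos_right (mul_pos (pow_pos hr0 L) hVpos)).mpr hkey
end

section
/- Let Λ ⊂ ℝ^L be a full-rank lattice with covolume ν. Then lim_{r→∞} (Σ_{λ ∈ Λ, ‖λ‖ ≤ r} ‖λ‖²) / r^{L+2} = (B_L/ν) · L/(L+2), where B_L = π^{L/2}/Γ(L/2+1) is the volume of the unit ball in ℝ^L. -/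
open Filter

open Filter MeasureTheory Module Submodule Metric Real Set
open scoped Pointwise

noncomputable section

namespace LatSqAux

lemma integrable_cut {g : ℝ → ℝ} (hg : Continuous g) (L : ℕ) (R : ℝ) :
    Integrable (fun x : EuclideanSpace ℝ (Fin L) => if ‖x‖ ≤ R then g ‖x‖ else 0) := by
  have h : (fun x : EuclideanSpace ℝ (Fin L) => if ‖x‖ ≤ R then g ‖x‖ else 0)
      = (Metric.closedBall (0 : EuclideanSpace ℝ (Fin L)) R).indicator (fun x => g ‖x‖) := by
    funext x
    by_cases hx : ‖x‖ ≤ R <;>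
      simp [Set.indicator_apply, Metric.mem_closedBall, dist_zero_right, hx]
  rw [h]
  exact ((hg.comp continuous_norm).continuousOn.integrableOn_compact
    (isCompact_closedBall _ _)).integrable_indicator measurableSet_closedBall

lemma integral_cut (L k : ℕ) (hL : 1 ≤ L) (R : ℝ) (hR : 0 ≤ R) :
    (∫ x : EuclideanSpace ℝ (Fin L), (if ‖x‖ ≤ R then ‖x‖ ^ k else 0)) =
      (L : ℝ) * (volume (Metric.ball (0 : EuclideanSpace ℝ (Fin L)) 1)).toReal
        * (R ^ (L + k) / (L + k)) := by
  obtain ⟨M, rfl⟩ : ∃ M, L = M + 1 := ⟨L - 1, (Nat.succ_pred_eq_of_pos hL).symm⟩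
  haveI : Nontrivial (EuclideanSpace ℝ (Fin (M + 1))) := by
    have : Module.finrank ℝ (EuclideanSpace ℝ (Fin (M + 1))) = M + 1 := by
      simp [finrank_euclideanSpace]
    exact Module.nontrivial_of_finrank_pos (R := ℝ)
      (by omega : 0 < Module.finrank ℝ (EuclideanSpace ℝ (Fin (M+1))))
  have key := MeasureTheory.integral_fun_norm_addHaar
    (volume : Measure (EuclideanSpace ℝ (Fin (M + 1))))
    (fun y : ℝ => if y ≤ R then y ^ k else 0)
  have hdim : Module.finrank ℝ (EuclideanSpace ℝ (Fin (M + 1))) = M + 1 := by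
    simp [finrank_euclideanSpace]
  rw [hdim] at key
  rw [key]
  have h1 : (∫ y in Set.Ioi (0:ℝ), y ^ (M + 1 - 1) • (if y ≤ R then y ^ k else 0))
      = ∫ y in Set.Ioc (0:ℝ) R, y ^ (M + k) := by
    rw [show M + 1 - 1 = M from rfl]
    have : (fun y : ℝ => y ^ M • (if y ≤ R then y ^ k else 0))
        = fun y : ℝ => (Set.Iic R).indicator (fun y => y ^ (M + k)) y := by
      funext y
      simp only [smul_eq_mul, mul_ite, mul_zero, Set.indicator_apply, Set.mem_Iic, ← pow_add]
    rw [this, MeasureTheory.setIntegral_indicator measurableSet_Iic, Set.Ioi_inter_Iic]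
  rw [h1, ← intervalIntegral.integral_of_le hR, integral_pow]
  rw [nsmul_eq_mul, smul_eq_mul]
  push_cast
  simp only [measureReal_def]
  ring

lemma measurable_floorE {L : ℕ} {ι : Type*} [Fintype ι]
    (b : Basis ι ℝ (EuclideanSpace ℝ (Fin L))) :
    Measurable (fun x : EuclideanSpace ℝ (Fin L) =>
      ((ZSpan.floor b x : _) : EuclideanSpace ℝ (Fin L))) := by
  have h : (fun x : EuclideanSpace ℝ (Fin L) =>
        ((ZSpan.floor b x : _) : EuclideanSpace ℝ (Fin L)))
      = fun x => ∑ i, ((⌊b.repr x i⌋ : ℝ)) • b i := by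
    funext x
    rw [ZSpan.floor, Submodule.coe_sum]
    congr 1
    funext i
    rw [Submodule.coe_smul_of_tower, Basis.restrictScalars_apply, Int.cast_smul_eq_zsmul]
  rw [h]
  refine Finset.measurable_sum _ fun i _ => Measurable.smul_const ?_ _
  have hm : Measurable fun x : EuclideanSpace ℝ (Fin L) => b.repr x i :=
    ((b.coord i).continuous_of_finiteDimensional).measurable
  exact measurable_from_top.comp hm.floor

lemma aux_tendsto_one (L : ℕ) (a : ℝ) :
    Tendsto (fun r : ℝ => (r - a) ^ (L + 2) / r ^ (L + 2)) atTop (nhds 1) := by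
  have h1 : Tendsto (fun r : ℝ => ((r - a) / r) ^ (L + 2)) atTop (nhds 1) := by
    have h0 : Tendsto (fun r : ℝ => (r - a) / r) atTop (nhds 1) := by
      have he : (fun r : ℝ => (r - a) / r) =ᶠ[atTop] fun r => 1 - a * r⁻¹ := by
        filter_upwards [eventually_gt_atTop (0:ℝ)] with r hr
        field_simp
      rw [tendsto_congr' he]
      have := tendsto_const_nhds (α := ℝ) (x := (1:ℝ)) |>.sub
        ((tendsto_inv_atTop_zero).const_mul a)
      simpa using this
    simpa using h0.pow (L + 2)
  refine Tendsto.congr' ?_ h1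
  filter_upwards [eventually_gt_atTop (0:ℝ)] with r hr
  rw [div_pow]

lemma aux_tendsto_zero (L k : ℕ) (hk : k < L + 2) (a : ℝ) :
    Tendsto (fun r : ℝ => (r - a) ^ k / r ^ (L + 2)) atTop (nhds 0) := by
  have h0 : Tendsto (fun r : ℝ => (r - a) / r) atTop (nhds 1) := by
    have he : (fun r : ℝ => (r - a) / r) =ᶠ[atTop] fun r => 1 - a * r⁻¹ := by
      filter_upwards [eventually_gt_atTop (0:ℝ)] with r hr
      field_simp
    rw [tendsto_congr' he]
    have := tendsto_const_nhds (α := ℝ) (x := (1:ℝ)) |>.sub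
      ((tendsto_inv_atTop_zero).const_mul a)
    simpa using this
  have h2 : Tendsto (fun r : ℝ => ((r - a) / r) ^ k * (r ^ (L + 2 - k))⁻¹) atTop (nhds 0) := by
    have hinv : Tendsto (fun r : ℝ => (r ^ (L + 2 - k))⁻¹) atTop (nhds 0) :=
      (tendsto_pow_atTop (by omega)).inv_tendsto_atTop
    have := (h0.pow k).mul hinv
    simpa using this
  refine Tendsto.congr' ?_ h2
  filter_upwards [eventually_gt_atTop (0:ℝ)] with r hr
  have hps : r ^ (L + 2) = r ^ k * r ^ (L + 2 - k) := by
    rw [← pow_add]; congr 1; omega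
  rw [div_pow, hps]
  field_simp

lemma integrable_cut3 (L : ℕ) (R c1 c2 : ℝ) :
    Integrable (fun x : EuclideanSpace ℝ (Fin L) =>
      if ‖x‖ ≤ R then ‖x‖ ^ 2 + c1 * ‖x‖ + c2 else 0) :=
  integrable_cut (g := fun y => y ^ 2 + c1 * y + c2) (by fun_prop) L R

lemma integral_cut3 (L : ℕ) (hL : 1 ≤ L) (R : ℝ) (hR : 0 ≤ R) (c1 c2 : ℝ) :
    (∫ x : EuclideanSpace ℝ (Fin L),
        (if ‖x‖ ≤ R then ‖x‖ ^ 2 + c1 * ‖x‖ + c2 else 0)) =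
      (L : ℝ) * (volume (Metric.ball (0 : EuclideanSpace ℝ (Fin L)) 1)).toReal
          * (R ^ (L + 2) / ((L : ℝ) + 2))
        + c1 * ((L : ℝ) * (volume (Metric.ball (0 : EuclideanSpace ℝ (Fin L)) 1)).toReal
          * (R ^ (L + 1) / ((L : ℝ) + 1)))
        + c2 * ((L : ℝ) * (volume (Metric.ball (0 : EuclideanSpace ℝ (Fin L)) 1)).toReal
          * (R ^ L / (L : ℝ))) := by
  have i2 := integrable_cut (g := fun y => y ^ 2) (by fun_prop) L R
  have i1 := integrable_cut (g := fun y => y ^ 1) (by fun_prop) L R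
  have i0 := integrable_cut (g := fun y => y ^ 0) (by fun_prop) L R
  have h : (fun x : EuclideanSpace ℝ (Fin L) =>
        if ‖x‖ ≤ R then ‖x‖ ^ 2 + c1 * ‖x‖ + c2 else 0)
      = fun x => ((if ‖x‖ ≤ R then ‖x‖ ^ 2 else 0) + c1 * (if ‖x‖ ≤ R then ‖x‖ ^ 1 else 0))
          + c2 * (if ‖x‖ ≤ R then ‖x‖ ^ 0 else 0) := by
    funext x
    split_ifs with hx
    · ring
    · ring
  have i21 : Integrable (fun x : EuclideanSpace ℝ (Fin L) =>
      (if ‖x‖ ≤ R then ‖x‖ ^ 2 else 0) + c1 * (if ‖x‖ ≤ R then ‖x‖ ^ 1 else 0)) volume :=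
    i2.add (i1.const_mul c1)
  have i0' : Integrable (fun x : EuclideanSpace ℝ (Fin L) =>
      c2 * (if ‖x‖ ≤ R then ‖x‖ ^ 0 else 0)) volume := i0.const_mul c2
  have i1' : Integrable (fun x : EuclideanSpace ℝ (Fin L) =>
      c1 * (if ‖x‖ ≤ R then ‖x‖ ^ 1 else 0)) volume := i1.const_mul c1
  rw [h, integral_add i21 i0', integral_add i2 i1', integral_const_mul, integral_const_mul,
    integral_cut L 2 hL R hR, integral_cut L 1 hL R hR, integral_cut L 0 hL R hR]
  push_cast
  ring

lemma aux_tendsto_comb (L : ℕ) (hL : 1 ≤ L) (A ν a c1 c2 : ℝ) (hν : ν ≠ 0) :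
    Tendsto (fun r : ℝ =>
      (A * ((r - a) ^ (L + 2) / ((L : ℝ) + 2))
        + c1 * (A * ((r - a) ^ (L + 1) / ((L : ℝ) + 1)))
        + c2 * (A * ((r - a) ^ L / (L : ℝ)))) / ν / r ^ (L + 2))
      atTop (nhds (A / (((L : ℝ) + 2) * ν))) := by
  have hL0 : ((L : ℝ)) ≠ 0 := by positivity
  have hL1 : ((L : ℝ) + 1) ≠ 0 := by positivity
  have hL2 : ((L : ℝ) + 2) ≠ 0 := by positivity
  have h1 := aux_tendsto_one L a
  have h2 := aux_tendsto_zero L (L + 1) (by omega) a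
  have h3 := aux_tendsto_zero L L (by omega) a
  have hcomb := ((h1.const_mul (A / (((L : ℝ) + 2) * ν))).add
      (h2.const_mul (c1 * A / (((L : ℝ) + 1) * ν)))).add
      (h3.const_mul (c2 * A / ((L : ℝ) * ν)))
  have hval : A / (((L : ℝ) + 2) * ν) * 1 + c1 * A / (((L : ℝ) + 1) * ν) * 0
      + c2 * A / ((L : ℝ) * ν) * 0 = A / (((L : ℝ) + 2) * ν) := by ring
  rw [hval] at hcomb
  refine Tendsto.congr' ?_ hcomb
  filter_upwards [eventually_gt_atTop (0 : ℝ)] with r hr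
  have hrk : r ^ (L + 2) ≠ 0 := by positivity
  field_simp

end LatSqAux

section Main

open LatSqAux

set_option maxHeartbeats 2000000 in
/-- For a full-rank lattice `Λ ⊂ ℝ^L` with covolume `ν`, the total squared
length of the lattice points in the ball of radius `r` satisfies
`lim_{r→∞} (Σ_{λ∈Λ, ‖λ‖≤r} ‖λ‖²) / r^{L+2} = (B_L/ν) · L/(L+2)`, where
`B_L = π^{L/2}/Γ(L/2+1)` is the volume of the unit ball. -/
theorem lattice_squared_length_asymptotics {L : ℕ} (hL : 1 ≤ L)
    (Λ : Submodule ℤ (EuclideanSpace ℝ (Fin L)))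
    [DiscreteTopology Λ] [IsZLattice ℝ Λ] :
    Tendsto
      (fun r : ℝ =>
        (∑' x : {x : Λ // ‖(x : EuclideanSpace ℝ (Fin L))‖ ≤ r},
            ‖((x : Λ) : EuclideanSpace ℝ (Fin L))‖ ^ 2) / r ^ (L + 2))
      atTop
      (nhds ((Real.pi ^ ((L : ℝ) / 2) / Real.Gamma ((L : ℝ) / 2 + 1)
          / ZLattice.covolume Λ) * ((L : ℝ) / ((L : ℝ) + 2)))) := by
  classical
  set E := EuclideanSpace ℝ (Fin L) with hE
  let b₀ := Module.Free.chooseBasis ℤ Λ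
  let b := Basis.ofZLatticeBasis ℝ Λ b₀
  have hspan : span ℤ (Set.range b) = Λ := b₀.ofZLatticeBasis_span ℝ
  set F := ZSpan.fundamentalDomain b with hFdef
  have hFd : IsAddFundamentalDomain Λ F volume := ZLattice.isAddFundamentalDomain b₀ volume
  set d : ℝ := ∑ i, ‖b i‖ with hddef
  have hd0 : 0 ≤ d := Finset.sum_nonneg fun i _ => norm_nonneg _
  set ν : ℝ := ZLattice.covolume Λ with hνdef
  have hνF : ν = (volume F).toReal := ZLattice.covolume_eq_measure_fundamentalDomain Λ volume hFd
  have hν0 : 0 < ν := ZLattice.covolume_pos Λ volume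
  set B : ℝ := (volume (Metric.ball (0 : E) 1)).toReal with hBdef
  set φ : E → E := fun x => ((ZSpan.floor b x : _) : E) with hφdef
  have hφmem : ∀ x, φ x ∈ Λ := fun x => hspan ▸ (ZSpan.floor b x).2
  have hfract : ∀ x : E, x - φ x = ZSpan.fract b x := fun x => rfl
  have hφd : ∀ x : E, ‖x - φ x‖ ≤ d := by
    intro x
    rw [hfract]
    exact ZSpan.norm_fract_le b x
  have hφm : Measurable φ := measurable_floorE b
  set h : ℝ → E → ℝ := fun r x => if ‖φ x‖ ≤ r then ‖φ x‖ ^ 2 else 0 with hhdef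
  haveI : MeasurableVAdd (↥Λ) E := by
    refine { measurable_const_vadd := ?_, measurable_vadd_const := ?_ }
    · intro c
      show Measurable fun x : E => _
      exact measurable_const_add _
    · intro x
      show Measurable fun c : ↥Λ => _
      exact (continuous_subtype_val.add continuous_const).measurable
  haveI : VAddInvariantMeasure (↥Λ) E volume := by
    constructor
    intro c s hs
    show volume ((fun x : E => (c : E) + x) ⁻¹' s) = volume s
    exact measure_preimage_add volume _ s
  have hmeas : ∀ r : ℝ, Measurable (h r) := by
    intro r
    exact Measurable.ite (measurableSet_le hφm.norm measurable_const)
      (hφm.norm.pow_const 2) measurable_const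
  have hxle : ∀ x : E, ‖x‖ ≤ ‖φ x‖ + d := by
    intro x
    have h1 : ‖x‖ ≤ ‖φ x‖ + ‖x - φ x‖ := by
      calc ‖x‖ = ‖φ x + (x - φ x)‖ := by rw [add_sub_cancel]
      _ ≤ ‖φ x‖ + ‖x - φ x‖ := norm_add_le _ _
    linarith [hφd x]
  have hφle : ∀ x : E, ‖φ x‖ ≤ ‖x‖ + d := by
    intro x
    have h1 : ‖φ x‖ ≤ ‖x‖ + ‖x - φ x‖ := by
      calc ‖φ x‖ = ‖x - (x - φ x)‖ := by rw [sub_sub_cancel]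
      _ ≤ ‖x‖ + ‖x - φ x‖ := norm_sub_le _ _
    linarith [hφd x]
  have hint : ∀ r : ℝ, 0 ≤ r → Integrable (h r) := by
    intro r hr
    have hb : ∀ x : E, ‖h r x‖ ≤
        (Metric.closedBall (0 : E) (r + d)).indicator (fun _ => r ^ 2) x := by
      intro x
      by_cases hx : ‖φ x‖ ≤ r
      · have hxb : ‖x‖ ≤ r + d := le_trans (hxle x) (by linarith)
        rw [Set.indicator_of_mem (by simpa [Metric.mem_closedBall, dist_zero_right] using hxb)]
        simp only [hhdef, hx, if_pos]
        rw [Real.norm_eq_abs, abs_of_nonneg (by positivity)]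
        exact pow_le_pow_left₀ (norm_nonneg _) hx 2
      · simp only [hhdef, hx, if_false]
        rw [norm_zero]
        exact Set.indicator_nonneg (fun _ _ => by positivity) x
    refine Integrable.mono' ?_ (hmeas r).aestronglyMeasurable (Filter.Eventually.of_forall hb)
    exact (MeasureTheory.integrableOn_const
      measure_closedBall_lt_top.ne).integrable_indicator measurableSet_closedBall
  -- the key identity
  have hkey : ∀ r : ℝ, 0 ≤ r →
      (∫ x, h r x) = ν * ∑' x : {x : Λ // ‖(x : E)‖ ≤ r}, ‖((x : Λ) : E)‖ ^ 2 := by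
    intro r hr
    rw [hFd.integral_eq_tsum _ (hint r hr)]
    have heval : ∀ l : Λ, (∫ x in (l +ᵥ F : Set E), h r x)
        = (if ‖(l : E)‖ ≤ r then ‖(l : E)‖ ^ 2 else 0) * ν := by
      intro l
      have hlmem : (l : E) ∈ span ℤ (Set.range b) := by rw [hspan]; exact l.2
      have hset : (l +ᵥ F : Set E) = (l : E) +ᵥ F := rfl
      have hcong : ∀ x ∈ ((l : E) +ᵥ F : Set E),
          h r x = if ‖(l : E)‖ ≤ r then ‖(l : E)‖ ^ 2 else 0 := by
        intro x hx
        obtain ⟨y, hy, rfl⟩ := hx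
        have hφy : φ ((l : E) +ᵥ y) = (l : E) := by
          have h1 : ZSpan.fract b ((l : E) + y) = y := by
            rw [ZSpan.fract_zSpan_add b y hlmem, ZSpan.fract_eq_self.mpr hy]
          have h2 := hfract ((l : E) + y)
          rw [h1] at h2
          have : ((l : E) +ᵥ y) = (l : E) + y := rfl
          rw [this]
          linear_combination (norm := module) -h2
        rw [hhdef]
        simp only [hφy]
      rw [hset, MeasureTheory.setIntegral_congr_fun
        ((ZSpan.fundamentalDomain_measurableSet b).const_vadd _) hcong,
        MeasureTheory.setIntegral_const, measureReal_def, measure_vadd, smul_eq_mul, mul_comm, hνF]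
    rw [tsum_congr heval, tsum_mul_right, mul_comm]
    congr 1
    have hind : ∀ l : Λ, (if ‖(l : E)‖ ≤ r then ‖(l : E)‖ ^ 2 else 0)
        = Set.indicator {x : Λ | ‖(x : E)‖ ≤ r} (fun x : Λ => ‖(x : E)‖ ^ 2) l := by
      intro l
      rw [Set.indicator_apply]
      rfl
    rw [tsum_congr hind, ← tsum_subtype]
    rfl
  -- pointwise and integral bounds
  have hup : ∀ r : ℝ, d ≤ r →
      (∫ x, h r x) ≤ (L : ℝ) * B * ((r + d) ^ (L + 2) / ((L : ℝ) + 2))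
        + 2 * d * ((L : ℝ) * B * ((r + d) ^ (L + 1) / ((L : ℝ) + 1)))
        + d ^ 2 * ((L : ℝ) * B * ((r + d) ^ L / (L : ℝ))) := by
    intro r hrd
    have hr0 : (0:ℝ) ≤ r := le_trans hd0 hrd
    have hbd : ∀ x : E, h r x ≤
        (if ‖x‖ ≤ r + d then ‖x‖ ^ 2 + (2 * d) * ‖x‖ + d ^ 2 else 0) := by
      intro x
      have h1 := hxle x
      have h2 := hφle x
      have hn := norm_nonneg (φ x)
      have hm := norm_nonneg x
      simp only [hhdef]
      split_ifs with hx hy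
      · nlinarith
      · exact absurd (le_trans h1 (by linarith)) hy
      · nlinarith
      · exact le_refl 0
    calc (∫ x, h r x) ≤ ∫ x : E,
          (if ‖x‖ ≤ r + d then ‖x‖ ^ 2 + (2 * d) * ‖x‖ + d ^ 2 else 0) :=
        integral_mono (hint r hr0) (integrable_cut3 L (r + d) (2 * d) (d ^ 2)) hbd
    _ = _ := integral_cut3 L hL (r + d) (by linarith) (2 * d) (d ^ 2)
  have hlow : ∀ r : ℝ, d ≤ r →
      (L : ℝ) * B * ((r - d) ^ (L + 2) / ((L : ℝ) + 2))
        + (-(2 * d)) * ((L : ℝ) * B * ((r - d) ^ (L + 1) / ((L : ℝ) + 1)))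
        + 0 * ((L : ℝ) * B * ((r - d) ^ L / (L : ℝ)))
        ≤ ∫ x, h r x := by
    intro r hrd
    have hr0 : (0:ℝ) ≤ r := le_trans hd0 hrd
    have hbd : ∀ x : E,
        (if ‖x‖ ≤ r - d then ‖x‖ ^ 2 + (-(2 * d)) * ‖x‖ + 0 else 0) ≤ h r x := by
      intro x
      have h1 := hxle x
      have h2 := hφle x
      have hn := norm_nonneg (φ x)
      have hm := norm_nonneg x
      simp only [hhdef]
      split_ifs with hy hx
      · rcases le_or_gt ‖x‖ d with hc | hc
        · nlinarith
        · nlinarith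
      · exact absurd (le_trans h2 (by linarith)) hx
      · positivity
      · exact le_refl 0
    calc (L : ℝ) * B * ((r - d) ^ (L + 2) / ((L : ℝ) + 2))
        + (-(2 * d)) * ((L : ℝ) * B * ((r - d) ^ (L + 1) / ((L : ℝ) + 1)))
        + 0 * ((L : ℝ) * B * ((r - d) ^ L / (L : ℝ)))
        = ∫ x : E, (if ‖x‖ ≤ r - d then ‖x‖ ^ 2 + (-(2 * d)) * ‖x‖ + 0 else 0) :=
        (integral_cut3 L hL (r - d) (by linarith) (-(2 * d)) 0).symm
    _ ≤ ∫ x, h r x :=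
        integral_mono (integrable_cut3 L (r - d) (-(2 * d)) 0) (hint r hr0) hbd
  -- final squeeze
  have hΓ : 0 < Real.Gamma ((L : ℝ) / 2 + 1) := Real.Gamma_pos_of_pos (by positivity)
  have hBval : B = π ^ ((L : ℝ) / 2) / Real.Gamma ((L : ℝ) / 2 + 1) := by
    haveI : Nonempty (Fin L) := ⟨⟨0, hL⟩⟩
    have hnn : (0:ℝ) ≤ Real.sqrt π ^ L / Real.Gamma ((L : ℝ) / 2 + 1) := by positivity
    rw [hBdef]
    show (volume (Metric.ball (0 : EuclideanSpace ℝ (Fin L)) 1)).toReal = _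
    rw [EuclideanSpace.volume_ball, Fintype.card_fin, ENNReal.ofReal_one, one_pow, one_mul,
      ENNReal.toReal_ofReal (by exact_mod_cast hnn)]
    congr 1
    rw [Real.sqrt_eq_rpow, ← Real.rpow_natCast (π ^ ((1:ℝ)/2)) L, ← Real.rpow_mul Real.pi_pos.le]
    congr 1
    ring
  have hν' : ν ≠ 0 := ne_of_gt hν0
  have hlowT := aux_tendsto_comb L hL ((L : ℝ) * B) ν d (-(2 * d)) 0 hν'
  have hupT := aux_tendsto_comb L hL ((L : ℝ) * B) ν (-d) (2 * d) (d ^ 2) hν'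
  have heqc : (L : ℝ) * B / (((L : ℝ) + 2) * ν)
      = (π ^ ((L : ℝ) / 2) / Real.Gamma ((L : ℝ) / 2 + 1) / ν) * ((L : ℝ) / ((L : ℝ) + 2)) := by
    rw [hBval]
    field_simp
  rw [← heqc]
  refine tendsto_of_tendsto_of_tendsto_of_le_of_le' hlowT hupT ?_ ?_
  · filter_upwards [eventually_ge_atTop (max d 1)] with r hr
    have hrd : d ≤ r := le_trans (le_max_left _ _) hr
    have hr1 : (1:ℝ) ≤ r := le_trans (le_max_right _ _) hr
    have hr0 : (0:ℝ) < r := lt_of_lt_of_le one_pos hr1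
    have hrk : (0:ℝ) < r ^ (L + 2) := by positivity
    have hS : (∑' x : {x : Λ // ‖(x : E)‖ ≤ r}, ‖((x : Λ) : E)‖ ^ 2)
        = (∫ x, h r x) / ν := by
      rw [hkey r hr0.le]
      field_simp
    show _ ≤ (∑' x : {x : Λ // ‖(x : E)‖ ≤ r}, ‖((x : Λ) : E)‖ ^ 2) / r ^ (L + 2)
    rw [hS]
    have h1 : ((L : ℝ) * B * ((r - d) ^ (L + 2) / ((L : ℝ) + 2))
        + (-(2 * d)) * ((L : ℝ) * B * ((r - d) ^ (L + 1) / ((L : ℝ) + 1)))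
        + 0 * ((L : ℝ) * B * ((r - d) ^ L / (L : ℝ)))) / ν / r ^ (L + 2)
        ≤ (∫ x, h r x) / ν / r ^ (L + 2) := by
      gcongr
      exact hlow r hrd
    exact h1
  · filter_upwards [eventually_ge_atTop (max d 1)] with r hr
    have hrd : d ≤ r := le_trans (le_max_left _ _) hr
    have hr1 : (1:ℝ) ≤ r := le_trans (le_max_right _ _) hr
    have hr0 : (0:ℝ) < r := lt_of_lt_of_le one_pos hr1
    have hrk : (0:ℝ) < r ^ (L + 2) := by positivity
    have hS : (∑' x : {x : Λ // ‖(x : E)‖ ≤ r}, ‖((x : Λ) : E)‖ ^ 2)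
        = (∫ x, h r x) / ν := by
      rw [hkey r hr0.le]
      field_simp
    show (∑' x : {x : Λ // ‖(x : E)‖ ≤ r}, ‖((x : Λ) : E)‖ ^ 2) / r ^ (L + 2) ≤ _
    rw [hS]
    simp only [sub_neg_eq_add]
    have h1 : (∫ x, h r x) / ν / r ^ (L + 2)
        ≤ ((L : ℝ) * B * ((r + d) ^ (L + 2) / ((L : ℝ) + 2))
        + 2 * d * ((L : ℝ) * B * ((r + d) ^ (L + 1) / ((L : ℝ) + 1)))
        + d ^ 2 * ((L : ℝ) * B * ((r + d) ^ L / (L : ℝ)))) / ν / r ^ (L + 2) := by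
      gcongr
      exact hup r hrd
    exact h1

end Main
end
end

section
/- Define the color of an ordered pair of distinct points ((a,b),(c,d)) ∈ ℤ² × ℤ² as follows: let Δ₁ = |c−a| and Δ₂ = |d−b|; set c(e) = ⌊(c+a)/(2Δ₁)⌋ mod 2 if Δ₁ > 0, and c(e) = ⌊(d+b)/(2Δ₂)⌋ mod 2 if Δ₁ = 0 (here ⌊·⌋ is integer floor division). Then: (i) the color is independent of orientation, i.e. the pair ((c,d),(a,b)) receives the same color as ((a,b),(c,d)); and (ii) translating an edge along itself flips the color, i.e. the edge with endpoints (c,d) and (2c−a, 2d−b) receives the color 1 − c(e). -/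
/-- The color of an ordered pair of distinct points `((a,b),(c,d)) ∈ ℤ² × ℤ²`:
with `Δ₁ = |c−a|` and `Δ₂ = |d−b|`, it is `⌊(c+a)/(2Δ₁)⌋ mod 2` if `Δ₁ > 0`,
and `⌊(d+b)/(2Δ₂)⌋ mod 2` if `Δ₁ = 0` (floor division). -/
def edgeColor (p q : ℤ × ℤ) : ℤ :=
  if q.1 - p.1 ≠ 0 then Int.fdiv (q.1 + p.1) (2 * |q.1 - p.1|) % 2
  else Int.fdiv (q.2 + p.2) (2 * |q.2 - p.2|) % 2

lemma edgeColor_flip_aux (x d : ℤ) (hd : d ≠ 0) :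
    Int.fdiv (x + 2 * d) (2 * |d|) % 2 = 1 - Int.fdiv x (2 * |d|) % 2 := by
  have h2 : (2 : ℤ) * |d| ≠ 0 := by simp [abs_eq_zero, hd]
  have hnn : (0 : ℤ) ≤ 2 * |d| := by positivity
  rw [Int.fdiv_eq_ediv_of_nonneg _ hnn, Int.fdiv_eq_ediv_of_nonneg _ hnn]
  rcases lt_or_gt_of_ne hd with h | h
  · have hx : x + 2 * d = x + (-1) * (2 * |d|) := by rw [abs_of_neg h]; ring
    rw [hx, Int.add_mul_ediv_right _ _ h2]
    omega
  · have hx : x + 2 * d = x + 1 * (2 * |d|) := by rw [abs_of_pos h]; ring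
    rw [hx, Int.add_mul_ediv_right _ _ h2]
    omega

/-- (i) The color of an edge is independent of its orientation; and
(ii) translating an edge along itself flips the color: the edge with endpoints
`(c,d)` and `(2c−a, 2d−b)` receives the color `1 − c(e)`. -/
theorem edgeColor_symm_and_translate_flip (p q : ℤ × ℤ) (hpq : p ≠ q) :
    edgeColor q p = edgeColor p q
    ∧ edgeColor q (2 * q.1 - p.1, 2 * q.2 - p.2) = 1 - edgeColor p q := by
  obtain ⟨a, b⟩ := p
  obtain ⟨c, d⟩ := q
  simp only [edgeColor]
  by_cases h1 : c - a ≠ 0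
  · have h1' : a - c ≠ 0 := by omega
    have h1'' : 2 * c - a - c ≠ 0 := by omega
    simp only [if_pos h1, if_pos h1', if_pos h1'']
    constructor
    · rw [abs_sub_comm a c, add_comm a c]
    · have hx := edgeColor_flip_aux (c + a) (c - a) h1
      have habs : |2 * c - a - c| = |c - a| := by congr 1; ring
      have hnum : 2 * c - a + c = (c + a) + 2 * (c - a) := by ring
      rw [habs, hnum, hx]
  · push_neg at h1
    have h2 : d - b ≠ 0 := by
      intro h
      apply hpq
      simp only [Prod.mk.injEq]
      omega
    have h1' : ¬ (a - c ≠ 0) := by omega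
    have h1'' : ¬ (2 * c - a - c ≠ 0) := by omega
    simp only [if_neg (not_ne_iff.mpr h1), if_neg h1', if_neg h1'']
    constructor
    · rw [abs_sub_comm b d, add_comm b d]
    · have hx := edgeColor_flip_aux (d + b) (d - b) h2
      have habs : |2 * d - b - d| = |d - b| := by congr 1; ring
      have hnum : 2 * d - b + d = (d + b) + 2 * (d - b) := by ring
      rw [habs, hnum, hx]
end

section
/- Let γ₁ be the 8×8 block-diagonal integer matrix whose two 4×4 diagonal blocks both equal C = [[0,1,0,0],[0,0,1,0],[0,0,0,1],[−1,0,0,0]], and let γ₈ be the 8×8 integer matrix with rows (0,0,0,0,1,0,0,0), (0,0,0,0,0,0,0,−1), (0,0,0,0,0,0,−1,0), (0,0,0,0,0,−1,0,0), (−1,0,0,0,0,0,0,0), (0,0,0,1,0,0,0,0), (0,0,1,0,0,0,0,0), (0,1,0,0,0,0,0,0). Then: (i) γ₁⁴ = −I₈, so γ₁ has order 8; (ii) the set Γ = {γ₁ⁱ : 0 ≤ i ≤ 7} ∪ {γ₈γ₁ⁱ : 0 ≤ i ≤ 7} is a subgroup of GL₈(ℤ) of order 16 containing −I₈; (iii)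 every element of Γ is an orthogonal matrix; and (iv) Γ acts fixed-point freely on ℝ⁸, i.e. for every γ ∈ Γ with γ ≠ I₈ and every x ∈ ℝ⁸, γx = x implies x = 0. -/
/-- The block-diagonal matrix `γ₁ = diag(C, C)` with
`C = [[0,1,0,0],[0,0,1,0],[0,0,0,1],[−1,0,0,0]]`. -/
def gammaOne : Matrix (Fin 8) (Fin 8) ℤ :=
  !![0, 1, 0, 0, 0, 0, 0, 0;
     0, 0, 1, 0, 0, 0, 0, 0;
     0, 0, 0, 1, 0, 0, 0, 0;
     -1, 0, 0, 0, 0, 0, 0, 0;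
     0, 0, 0, 0, 0, 1, 0, 0;
     0, 0, 0, 0, 0, 0, 1, 0;
     0, 0, 0, 0, 0, 0, 0, 1;
     0, 0, 0, 0, -1, 0, 0, 0]

def gammaEight : Matrix (Fin 8) (Fin 8) ℤ :=
  !![0, 0, 0, 0, 1, 0, 0, 0;
     0, 0, 0, 0, 0, 0, 0, -1;
     0, 0, 0, 0, 0, 0, -1, 0;
     0, 0, 0, 0, 0, -1, 0, 0;
     -1, 0, 0, 0, 0, 0, 0, 0;
     0, 0, 0, 1, 0, 0, 0, 0;
     0, 0, 1, 0, 0, 0, 0, 0;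
     0, 1, 0, 0, 0, 0, 0, 0]

/-- The set `Γ = {γ₁ⁱ : 0 ≤ i ≤ 7} ∪ {γ₈γ₁ⁱ : 0 ≤ i ≤ 7}`. -/
def gammaGroupZ8 : Set (Matrix (Fin 8) (Fin 8) ℤ) :=
  {A | (∃ i ≤ 7, A = gammaOne ^ i) ∨ ∃ i ≤ 7, A = gammaEight * gammaOne ^ i}

namespace Z8aux

def L : List (Matrix (Fin 8) (Fin 8) ℤ) :=
  [gammaOne ^ 0, gammaOne ^ 1, gammaOne ^ 2, gammaOne ^ 3,
   gammaOne ^ 4, gammaOne ^ 5, gammaOne ^ 6, gammaOne ^ 7,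
   gammaEight * gammaOne ^ 0, gammaEight * gammaOne ^ 1,
   gammaEight * gammaOne ^ 2, gammaEight * gammaOne ^ 3,
   gammaEight * gammaOne ^ 4, gammaEight * gammaOne ^ 5,
   gammaEight * gammaOne ^ 6, gammaEight * gammaOne ^ 7]

lemma mem_iff (A : Matrix (Fin 8) (Fin 8) ℤ) : A ∈ gammaGroupZ8 ↔ A ∈ L := by
  constructor
  · rintro (⟨i, hi, rfl⟩ | ⟨i, hi, rfl⟩) <;> interval_cases i <;> simp [L]
  · intro h
    fin_cases h
    · exact Or.inl ⟨0, by norm_num, rfl⟩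
    · exact Or.inl ⟨1, by norm_num, rfl⟩
    · exact Or.inl ⟨2, by norm_num, rfl⟩
    · exact Or.inl ⟨3, by norm_num, rfl⟩
    · exact Or.inl ⟨4, by norm_num, rfl⟩
    · exact Or.inl ⟨5, by norm_num, rfl⟩
    · exact Or.inl ⟨6, by norm_num, rfl⟩
    · exact Or.inl ⟨7, by norm_num, rfl⟩
    · exact Or.inr ⟨0, by norm_num, rfl⟩
    · exact Or.inr ⟨1, by norm_num, rfl⟩
    · exact Or.inr ⟨2, by norm_num, rfl⟩
    · exact Or.inr ⟨3, by norm_num, rfl⟩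
    · exact Or.inr ⟨4, by norm_num, rfl⟩
    · exact Or.inr ⟨5, by norm_num, rfl⟩
    · exact Or.inr ⟨6, by norm_num, rfl⟩
    · exact Or.inr ⟨7, by norm_num, rfl⟩

set_option maxRecDepth 100000 in
set_option maxHeartbeats 1000000 in
lemma h4 : gammaOne ^ 4 = -1 := by decide

lemma h8 : gammaOne ^ 8 = 1 := by
  rw [show gammaOne ^ 8 = (gammaOne ^ 4) ^ 2 from by rw [← pow_mul], h4, neg_one_sq]

lemma pow_mod (n : ℕ) : gammaOne ^ n = gammaOne ^ (n % 8) := by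
  conv_lhs => rw [← Nat.div_add_mod n 8]
  rw [pow_add, pow_mul, h8, one_pow, one_mul]

set_option maxRecDepth 100000 in
set_option maxHeartbeats 1000000 in
lemma h17 : gammaOne * gammaEight = gammaEight * gammaOne ^ 7 := by decide

set_option maxRecDepth 100000 in
set_option maxHeartbeats 1000000 in
lemma h82 : gammaEight * gammaEight = gammaOne ^ 4 := by decide

lemma hcomm (i : ℕ) : gammaOne ^ i * gammaEight = gammaEight * gammaOne ^ (7 * i) := by
  induction i with
  | zero => simp
  | succ k ih =>
      rw [show 7 * (k + 1) = 7 * k + 7 by ring, pow_succ, mul_assoc, h17,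
        ← mul_assoc, ih, mul_assoc, ← pow_add]

set_option maxRecDepth 100000 in
set_option maxHeartbeats 4000000 in
lemma hnodup : L.Nodup := by decide

set_option maxRecDepth 100000 in
set_option maxHeartbeats 4000000 in
lemma hortho : ∀ A ∈ L, A * Matrix.transpose A = 1 := by decide

set_option maxRecDepth 100000 in
set_option maxHeartbeats 4000000 in
lemma htrans : ∀ A ∈ L, Matrix.transpose A ∈ L := by decide

set_option maxRecDepth 100000 in
set_option maxHeartbeats 4000000 in
lemma hkey : ∀ A ∈ L, A = 1 ∨ A = -1 ∨ A ^ 2 = -1 ∨ A ^ 4 = -1 := by decide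

lemma fp (A : Matrix (Fin 8) (Fin 8) ℤ) (m : ℕ) (h : A ^ m = -1)
    (x : Fin 8 → ℝ) (hx : (A.map (Int.cast : ℤ → ℝ)).mulVec x = x) : x = 0 := by
  set B := A.map (Int.cast : ℤ → ℝ) with hB
  have hBk : ∀ k : ℕ, (A ^ k).map (Int.cast : ℤ → ℝ) = B ^ k := fun k => by
    simpa [RingHom.mapMatrix_apply, Int.coe_castRingHom] using
      (map_pow ((Int.castRingHom ℝ).mapMatrix) A k)
  have hpow : ∀ k : ℕ, (B ^ k).mulVec x = x := by
    intro k
    induction k with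
    | zero => simp [Matrix.one_mulVec]
    | succ k ih => rw [pow_succ, ← Matrix.mulVec_mulVec, hx, ih]
  have hm := hpow m
  rw [← hBk, h] at hm
  have hm' : -x = x := by
    have hneg : ((-1 : Matrix (Fin 8) (Fin 8) ℤ).map (Int.cast : ℤ → ℝ))
        = (-1 : Matrix (Fin 8) (Fin 8) ℝ) := by
      ext i j
      simp [Matrix.map_apply, Matrix.neg_apply, Matrix.one_apply,
        apply_ite (Int.cast : ℤ → ℝ)]
    rw [hneg, Matrix.neg_mulVec, Matrix.one_mulVec] at hm
    exact hm
  funext i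
  have := congrFun hm' i
  simp only [Pi.neg_apply, Pi.zero_apply] at this ⊢
  linarith

end Z8aux

/-- The symmetry group of order 16 for `ℤ⁸`:
(i) `γ₁⁴ = −I₈` and `γ₁` has order 8;
(ii) `Γ = {γ₁ⁱ : 0 ≤ i ≤ 7} ∪ {γ₈γ₁ⁱ : 0 ≤ i ≤ 7}` is a subgroup of `GL₈(ℤ)` of
order 16 containing `−I₈` (it contains the identity, is closed under
multiplication, every element has an inverse in `Γ`, and it has 16 elements);
(iii) every element of `Γ` is orthogonal;
(iv) `Γ` acts fixed-point freely on `ℝ⁸`. -/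
theorem Z8_symmetry_group :
    (gammaOne ^ 4 = -1 ∧ orderOf gammaOne = 8)
    ∧ ((1 : Matrix (Fin 8) (Fin 8) ℤ) ∈ gammaGroupZ8
        ∧ (-1 : Matrix (Fin 8) (Fin 8) ℤ) ∈ gammaGroupZ8
        ∧ (∀ A ∈ gammaGroupZ8, ∀ B ∈ gammaGroupZ8, A * B ∈ gammaGroupZ8)
        ∧ (∀ A ∈ gammaGroupZ8, ∃ B ∈ gammaGroupZ8, A * B = 1 ∧ B * A = 1)
        ∧ gammaGroupZ8.ncard = 16)
    ∧ (∀ A ∈ gammaGroupZ8, A * Matrix.transpose A = 1)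
    ∧ (∀ A ∈ gammaGroupZ8, A ≠ 1 →
        ∀ x : Fin 8 → ℝ, (A.map (Int.cast : ℤ → ℝ)).mulVec x = x → x = 0) := by
  open Z8aux in
  have h4 := Z8aux.h4
  refine ⟨⟨h4, ?_⟩, ⟨?_, ?_, ?_, ?_, ?_⟩, ?_, ?_⟩
  · -- orderOf
    have hne : gammaOne ^ (2 : ℕ) ^ 2 ≠ 1 := by
      rw [show (2 : ℕ) ^ 2 = 4 from rfl, h4]
      intro h
      have := congrFun (congrFun h 0) 0
      norm_num [Matrix.one_apply] at this
    have hfin : gammaOne ^ (2 : ℕ) ^ 3 = 1 := by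
      rw [show (2 : ℕ) ^ 3 = 8 from rfl]; exact Z8aux.h8
    have := orderOf_eq_prime_pow (x := gammaOne) (p := 2) (n := 2) hne hfin
    simpa using this
  · exact Or.inl ⟨0, by norm_num, (pow_zero _).symm⟩
  · exact Or.inl ⟨4, by norm_num, h4.symm⟩
  · -- closure
    rintro A (⟨i, hi, rfl⟩ | ⟨i, hi, rfl⟩) B (⟨j, hj, rfl⟩ | ⟨j, hj, rfl⟩)
    · exact Or.inl ⟨(i + j) % 8, by omega, by rw [← pow_add, Z8aux.pow_mod]⟩
    · refine Or.inr ⟨(7 * i + j) % 8, by omega, ?_⟩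
      rw [← Z8aux.pow_mod, pow_add, ← mul_assoc, Z8aux.hcomm i, mul_assoc]
    · refine Or.inr ⟨(i + j) % 8, by omega, ?_⟩
      rw [mul_assoc, ← pow_add, Z8aux.pow_mod]
    · refine Or.inl ⟨(4 + (7 * i + j)) % 8, by omega, ?_⟩
      rw [← Z8aux.pow_mod, pow_add, pow_add, ← Z8aux.h82]
      simp only [mul_assoc]
      rw [← mul_assoc (gammaOne ^ i), Z8aux.hcomm i, mul_assoc]
  · -- inverses
    intro A hA
    have hL := (Z8aux.mem_iff A).1 hA
    refine ⟨Matrix.transpose A, (Z8aux.mem_iff _).2 (Z8aux.htrans A hL), ?_, ?_⟩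
    · exact Z8aux.hortho A hL
    · exact mul_eq_one_comm.1 (Z8aux.hortho A hL)
  · -- ncard
    have : gammaGroupZ8 = ↑Z8aux.L.toFinset := by
      ext A; simp [Z8aux.mem_iff A, List.mem_toFinset]
    rw [this, Set.ncard_coe_finset, List.toFinset_card_of_nodup Z8aux.hnodup]
    rfl
  · -- orthogonal
    intro A hA
    exact Z8aux.hortho A ((Z8aux.mem_iff A).1 hA)
  · -- fixed-point free
    intro A hA hne x hx
    rcases Z8aux.hkey A ((Z8aux.mem_iff A).1 hA) with h | h | h | h
    · exact absurd h hne
    · exact Z8aux.fp A 1 (by rw [pow_one, h]) x hx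
    · exact Z8aux.fp A 2 h x hx
    · exact Z8aux.fp A 4 h x hx
end
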